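/- arXiv:2407.03186 — 3 statements merged into one kernel-verified Lean document; each statement's English description precedes it below -/
import Mathlib

section
/- Assume b_{kk} = 0. Then for either sign ε ∈ {+1, −1}, Ẽ_ε · B · F̃_ε = μ_k(B); that is, the (i,j) entry of Ẽ_ε · B · F̃_ε equals −b_{ij} if i = k or j = k, and equals b_{ij} + [b_{ik}]_+·[b_{kj}]_+ − [−b_{ik}]_+·[−b_{kj}]_+ otherwise. -/
/-!
STATEMENT 1: Assume b_{kk} = 0. Then for either sign ε ∈ {+1, −1},
Ẽ_ε · B · F̃_ε = μ_k(B).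
-/

/-- The matrix Ẽ_ε: it agrees with the identity matrix except in its k-th column, where
`(Ẽ_ε)_{kk} = −1` and `(Ẽ_ε)_{ik} = [−ε·b_{ik}]_+` for `i ≠ k`. -/
def Etil {I : Type*} [DecidableEq I] (B : Matrix I I ℚ) (k : I) (ε : ℚ) : Matrix I I ℚ :=
  Matrix.of fun i j =>
    if j = k then (if i = k then -1 else max (-(ε * B i k)) 0)
    else (if i = j then 1 else 0)

/-- The matrix F̃_ε: it agrees with the identity matrix except in its k-th row, where
`(F̃_ε)_{kk} = −1` and `(F̃_ε)_{kj} = [ε·b_{kj}]_+` for `j ≠ k`. -/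
def Ftil {I : Type*} [DecidableEq I] (B : Matrix I I ℚ) (k : I) (ε : ℚ) : Matrix I I ℚ :=
  Matrix.of fun i j =>
    if i = k then (if j = k then -1 else max (ε * B k j) 0)
    else (if i = j then 1 else 0)

/-- The mutated matrix μ_k(B): `μ_k(B)_{ij} = −b_{ij}` if `i = k` or `j = k`, and
`μ_k(B)_{ij} = b_{ij} + [b_{ik}]_+·[b_{kj}]_+ − [−b_{ik}]_+·[−b_{kj}]_+` otherwise. -/
def mutate {I : Type*} [DecidableEq I] (B : Matrix I I ℚ) (k : I) : Matrix I I ℚ :=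
  Matrix.of fun i j =>
    if i = k ∨ j = k then -B i j
    else B i j + max (B i k) 0 * max (B k j) 0 - max (-B i k) 0 * max (-B k j) 0

/-! Left multiplication by `Etil B k ε` negates row `k` and adds `[-ε b_ik]_+` times row `k` to
row `i`; right multiplication by `Ftil B k ε` does the same to the columns. As `b_kk = 0`, the
entry at `(i, j)` off row and column `k` becomes `b_ij + [-ε b_ik]_+ b_kj + b_ik [ε b_kj]_+`, and
for `ε = ±1` writing `b = [b]_+ - [-b]_+` turns this into the mutation formula. -/

theorem max_neg_mul_mul_add_mul_max_mul {R : Type*} [CommRing R] [LinearOrder R]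
    [IsOrderedRing R] {ε : R} (hε : ε = 1 ∨ ε = -1) (a c : R) :
    max (-(ε * a)) 0 * c + a * max (ε * c) 0 =
      max a 0 * max c 0 - max (-a) 0 * max (-c) 0 := by
  have ha := max_zero_sub_max_neg_zero_eq_self a
  have hc := max_zero_sub_max_neg_zero_eq_self c
  rcases hε with rfl | rfl
  · simp only [one_mul]
    linear_combination (-max (-a) 0) * hc - max c 0 * ha
  · simp only [neg_one_mul, neg_neg]
    linear_combination (-max a 0) * hc - max (-c) 0 * ha

section

variable {I J : Type*} [Fintype I] [DecidableEq I] (B : Matrix I I ℚ) (k : I) (ε : ℚ)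

theorem Etil_mul_apply (M : Matrix I J ℚ) (i : I) (j : J) :
    (Etil B k ε * M) i j =
      if i = k then -M k j else M i j + max (-(ε * B i k)) 0 * M k j := by
  rw [Matrix.mul_apply]
  split_ifs with hi
  · subst hi
    rw [Fintype.sum_eq_single i fun p hp => by simp [Etil, hp, Ne.symm hp]]
    simp [Etil]
  · rw [Fintype.sum_eq_add i k hi fun p hp => by simp [Etil, hp.2, Ne.symm hp.1]]
    simp [Etil, hi]

theorem mul_Ftil_apply (M : Matrix J I ℚ) (i : J) (j : I) :
    (M * Ftil B k ε) i j =
      if j = k then -M i k else M i j + M i k * max (ε * B k j) 0 := by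
  rw [Matrix.mul_apply]
  split_ifs with hj
  · subst hj
    rw [Fintype.sum_eq_single j fun p hp => by simp [Ftil, hp]]
    simp [Ftil]
  · rw [Fintype.sum_eq_add j k hj fun p hp => by simp [Ftil, hp.1, hp.2]]
    simp [Ftil, hj]

end

theorem Etil_mul_B_mul_Ftil_eq_mutate {I : Type*} [Fintype I] [DecidableEq I]
    (B : Matrix I I ℚ) (k : I) (hB : B k k = 0) (ε : ℚ) (hε : ε = 1 ∨ ε = -1) :
    Etil B k ε * B * Ftil B k ε = mutate B k := by
  ext i j
  rw [mul_Ftil_apply, Etil_mul_apply, Etil_mul_apply]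
  by_cases hj : j = k
  · subst hj
    by_cases hi : i = j <;> simp [mutate, hi, hB]
  by_cases hi : i = k
  · subst hi
    simp [mutate, hj, hB]
  simp only [mutate, Matrix.of_apply, hi, hj, hB, if_false, or_self, mul_zero, add_zero]
  linear_combination max_neg_mul_mul_add_mul_max_mul hε (B i k) (B k j)
end

section
/- Suppose there exist strictly positive rationals (d_i^∨)_{i∈I} such that d_i^∨·b_{ij} = −d_j^∨·b_{ji} for all i, j ∈ I (i.e., B is skew-symmetrizable). Then the mutated matrix is skew-symmetrizable with the same skew-symmetrizers: d_i^∨·μ_k(B)_{ij} = −d_j^∨·μ_k(B)_{ji} for all i, j ∈ I. -/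
section SkewSymmetrizable

variable {R : Type*} [CommRing R] {I : Type*}

def IsSkewSymmetrizer (d : I → R) (B : Matrix I I R) : Prop :=
  ∀ i j, d i * B i j = -(d j * B j i)

theorem IsSkewSymmetrizer.neg {d : I → R} {B : Matrix I I R} (h : IsSkewSymmetrizer d B) :
    IsSkewSymmetrizer d (-B) := fun i j => by
  simp only [Matrix.neg_apply, mul_neg, h i j]

variable [LinearOrder R] [IsOrderedRing R]

theorem mul_max_zero_eq_of_mul_eq_neg_mul {a b x y : R} (ha : 0 ≤ a) (hb : 0 ≤ b)
    (h : a * x = -(b * y)) : a * max x 0 = b * max (-y) 0 := by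
  rw [mul_max_of_nonneg _ _ ha, mul_max_of_nonneg _ _ hb, mul_zero, mul_zero, mul_neg, ← h]

theorem IsSkewSymmetrizer.mul_max_zero_mul_max_zero {d : I → R} {B : Matrix I I R}
    (h : IsSkewSymmetrizer d B) (hd : ∀ i, 0 ≤ d i) (i j k : I) :
    d i * (max (B i k) 0 * max (B k j) 0) = d j * (max (-B j k) 0 * max (-B k i) 0) := by
  have hik := mul_max_zero_eq_of_mul_eq_neg_mul (hd i) (hd k) (h i k)
  have hkj := mul_max_zero_eq_of_mul_eq_neg_mul (hd k) (hd j) (h k j)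
  calc d i * (max (B i k) 0 * max (B k j) 0)
      = max (-B k i) 0 * (d k * max (B k j) 0) := by rw [← mul_assoc, hik]; ring
    _ = d j * (max (-B j k) 0 * max (-B k i) 0) := by rw [hkj]; ring

end SkewSymmetrizable

theorem mutate_skewSymmetrizable_general {I : Type*} [DecidableEq I]
    (B : Matrix I I ℚ) (k : I) (d : I → ℚ) (hd : ∀ i, 0 < d i)
    (hskew : ∀ i j, d i * B i j = -(d j * B j i)) :
    ∀ i j, d i * mutate B k i j = -(d j * mutate B k j i) := by
  intro i j
  have hij := hskew i j
  simp only [mutate, Matrix.of_apply, or_comm (a := j = k)]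
  split_ifs
  · linarith
  · have hd' i := (hd i).le
    have hB : IsSkewSymmetrizer d B := hskew
    have hpos := hB.mul_max_zero_mul_max_zero hd' i j k
    have hneg := hB.neg.mul_max_zero_mul_max_zero hd' i j k
    simp only [Matrix.neg_apply, neg_neg] at hneg
    linear_combination hij + hpos - hneg

theorem mutate_skewSymmetrizable {I : Type*} [Fintype I] [DecidableEq I]
    (B : Matrix I I ℚ) (k : I) (d : I → ℚ) (hd : ∀ i, 0 < d i)
    (hskew : ∀ i j, d i * B i j = -(d j * B j i)) :
    ∀ i j, d i * mutate B k i j = -(d j * mutate B k j i) :=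
  mutate_skewSymmetrizable_general B k d hd hskew
end

section
/- For any η, g ∈ ℤ^I, the set {g' ∈ ℤ^I : η ⪯ g' ⪯ g} is finite. -/
/-! Since `p*` is injective, `g' = g + p*(n)` and `η = g' + p*(m)` determine `n + m` as the unique
`N` with `η = g + p*(N)`. Hence every `g'` in the interval is `g + p*(n)` for some `n ≤ N`
coordinatewise, and there are finitely many such `n`. -/

noncomputable section

namespace CAFreeze

variable {I : Type*} [Fintype I] [DecidableEq I]

/-- The Laurent polynomial ring LP = ℤ[x_i^{±1} : i ∈ I], modeled as the group algebra of
ℤ^I over ℤ. -/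
abbrev LP (I : Type*) := AddMonoidAlgebra ℤ (I → ℤ)

/-- The monomial x^m for an exponent vector m ∈ ℤ^I. -/
def mono (m : I → ℤ) : LP I := AddMonoidAlgebra.ofCoeff (Finsupp.single m 1)

/-- The coefficient of the monomial x^m in z ∈ LP. -/
def coeff (z : LP I) (m : I → ℤ) : ℤ := (AddMonoidAlgebra.coeff z : (I → ℤ) →₀ ℤ) m

variable (Iuf : Finset I) (Bt : I → {i // i ∈ Iuf} → ℤ)

/-- The linear map p* : ℤ^{I_uf} → ℤ^I, p*(n) = B̃·n. -/
def pstar (n : {i // i ∈ Iuf} → ℤ) : I → ℤ := fun i => ∑ kk : {i // i ∈ Iuf}, Bt i kk * n kk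

/-- p*(n) for n ∈ ℕ^{I_uf}. -/
def pstarN (n : {i // i ∈ Iuf} → ℕ) : I → ℤ := pstar Iuf Bt fun kk => (n kk : ℤ)

/-- supp n = {k ∈ I_uf : n_k ≠ 0}, as a subset of I. -/
def suppn (n : {i // i ∈ Iuf} → ℕ) : Set I := {i | ∃ h : i ∈ Iuf, n ⟨i, h⟩ ≠ 0}

/-- LP_{⪯m}: the ℤ-submodule of LP spanned by the monomials x^{m+p*(n)}, n ∈ ℕ^{I_uf}. -/
def LPle (m : I → ℤ) : Submodule ℤ (LP I) :=
  Submodule.span ℤ {z : LP I | ∃ n : {i // i ∈ Iuf} → ℕ, z = mono (m + pstarN Iuf Bt n)}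

open Classical in
/-- The freezing operator frz_{F,m}: it keeps the monomials x^{m+p*(n)} with
supp n ∩ F = ∅ and kills the monomials x^{m+p*(n)} with supp n ∩ F ≠ ∅. -/
def frz (F : Finset I) (m : I → ℤ) (z : LP I) : LP I :=
  AddMonoidAlgebra.ofCoeff <| Finsupp.filter
    (fun e => ∃ n : {i // i ∈ Iuf} → ℕ, e = m + pstarN Iuf Bt n ∧ suppn Iuf n ∩ (F : Set I) = ∅) (AddMonoidAlgebra.coeff z)

/-- z ∈ LP is pointed at g: z = Σ_{n ∈ ℕ^{I_uf}} c_n x^{g+p*(n)} with c_0 = 1. -/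
def Pointed (g : I → ℤ) (z : LP I) : Prop :=
  coeff z g = 1 ∧
    ∀ e ∈ (AddMonoidAlgebra.coeff z : (I → ℤ) →₀ ℤ).support, ∃ n : {i // i ∈ Iuf} → ℕ, e = g + pstarN Iuf Bt n

/-- supp z = ∪_{c_n ≠ 0} supp n, for a g-pointed z = Σ_n c_n x^{g+p*(n)}. -/
def suppz (g : I → ℤ) (z : LP I) : Set I :=
  ⋃ n ∈ {n : {i // i ∈ Iuf} → ℕ | coeff z (g + pstarN Iuf Bt n) ≠ 0}, suppn Iuf n

/-- suppDim z ∈ ℕ^{I_uf}: the coordinatewise maximum of {n : c_n ≠ 0}, for a g-pointed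
z = Σ_n c_n x^{g+p*(n)}. -/
def suppDim (g : I → ℤ) (z : LP I) : {i // i ∈ Iuf} → ℕ :=
  fun kk => sSup {d : ℕ | ∃ n : {i // i ∈ Iuf} → ℕ, coeff z (g + pstarN Iuf Bt n) ≠ 0 ∧ n kk = d}

section

omit [Fintype I] [DecidableEq I]

lemma pstarN_add (n m : {i // i ∈ Iuf} → ℕ) :
    pstarN Iuf Bt (n + m) = pstarN Iuf Bt n + pstarN Iuf Bt m := by
  funext i
  simp [pstarN, pstar, Finset.sum_add_distrib, mul_add]

variable {Iuf Bt}

lemma pstarN_injective (hfull : Function.Injective (pstar Iuf Bt)) :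
    Function.Injective (pstarN Iuf Bt) :=
  fun n m h => funext fun k => by exact_mod_cast congrFun (hfull h) k

lemma le_of_pstarN_add_eq (hfull : Function.Injective (pstar Iuf Bt))
    {n m N : {i // i ∈ Iuf} → ℕ} (h : pstarN Iuf Bt (n + m) = pstarN Iuf Bt N) : n ≤ N := by
  rw [← pstarN_injective hfull h]
  exact le_self_add

lemma dominance_interval_subset_image_Iic (hfull : Function.Injective (pstar Iuf Bt))
    {η g : I → ℤ} {N : {i // i ∈ Iuf} → ℕ} (hη : η = g + pstarN Iuf Bt N) :
    {g' : I → ℤ | (∃ n : {i // i ∈ Iuf} → ℕ, g' = g + pstarN Iuf Bt n) ∧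
      (∃ n : {i // i ∈ Iuf} → ℕ, η = g' + pstarN Iuf Bt n)} ⊆
      (fun n => g + pstarN Iuf Bt n) '' Set.Iic N := by
  rintro _ ⟨⟨n, rfl⟩, m, hm⟩
  refine ⟨n, le_of_pstarN_add_eq (m := m) hfull ?_, rfl⟩
  rw [pstarN_add]
  simpa [hη, add_assoc] using hm.symm

end

theorem dominance_interval_finite (hfull : Function.Injective (pstar Iuf Bt))
    (η g : I → ℤ) :
    {g' : I → ℤ | (∃ n : {i // i ∈ Iuf} → ℕ, g' = g + pstarN Iuf Bt n) ∧
      (∃ n : {i // i ∈ Iuf} → ℕ, η = g' + pstarN Iuf Bt n)}.Finite := by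
  refine Set.not_infinite.mp fun hinf => hinf ?_
  obtain ⟨_, ⟨n₀, rfl⟩, m₀, hη⟩ := hinf.nonempty
  rw [add_assoc, ← pstarN_add] at hη
  exact ((Set.finite_Iic _).image _).subset (dominance_interval_subset_image_Iic hfull hη)

end CAFreeze
end
end
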